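/- Let A be a pseudo-hoop and F a filter of A possessing a least element a. Then a is idempotent (a·a = a), a·x = x·a for all x ∈ A, and F is a normal filter, i.e. for all x,y ∈ A: x→y ∈ F if and only if x⇝y ∈ F. -/
import Mathlib


/-- A pseudo-hoop: an algebra `(A; ·, →, ⇝, 1)` satisfying the pseudo-hoop
axioms; the induced relation `x ≤ y ↔ x → y = 1` is a partial order. -/
class PseudoHoop (A : Type*) extends Mul A, One A, PartialOrder A where
  arr : A → A → A
  sarr : A → A → A
  mul_one' : ∀ x : A, x * 1 = x
  one_mul' : ∀ x : A, 1 * x = x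
  arr_self : ∀ x : A, arr x x = 1
  sarr_self : ∀ x : A, sarr x x = 1
  arr_mul : ∀ x y z : A, arr (x * y) z = arr x (arr y z)
  sarr_mul : ∀ x y z : A, sarr (x * y) z = sarr y (sarr x z)
  div₁ : ∀ x y : A, (arr x y) * x = (arr y x) * y
  div₂ : ∀ x y : A, (arr x y) * x = x * (sarr x y)
  div₃ : ∀ x y : A, x * (sarr x y) = y * (sarr y x)
  le_iff_arr : ∀ x y : A, x ≤ y ↔ arr x y = 1

namespace PseudoHoop

variable {A : Type*} [PseudoHoop A]

/-- The meet `x ∧ y = (x → y) · x` of a pseudo-hoop. -/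
def pinf (x y : A) : A := (arr x y) * x

/-- A filter of a pseudo-hoop: an upper set containing `1` that is closed
under multiplication. -/
def PHFilter (F : Set A) : Prop :=
  IsUpperSet F ∧ (1 : A) ∈ F ∧ ∀ x ∈ F, ∀ y ∈ F, x * y ∈ F

/-- The polar `M^⊥ = {x | x ∨ y = 1 for all y ∈ M}`, where `x ∨ y = 1` means
that `1` is the least upper bound of `{x, y}`. -/
def polar (M : Set A) : Set A := {x : A | ∀ y ∈ M, IsLUB {x, y} (1 : A)}

/-- `ν_F(X)`: the upper bounds of `X` lying in `F`. -/
def nuF (F X : Set A) : Set A := {a : A | a ∈ F ∧ ∀ x ∈ X, x ≤ a}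

/-- Elementwise implication `Y ⟶ X = {a → x | a ∈ Y, x ∈ X}`. -/
def setArr (Y X : Set A) : Set A := {c : A | ∃ a ∈ Y, ∃ x ∈ X, c = arr a x}

/-- Elementwise implication `Y ⟿ X = {a ⇝ x | a ∈ Y, x ∈ X}`. -/
def setSarr (Y X : Set A) : Set A := {c : A | ∃ a ∈ Y, ∃ x ∈ X, c = sarr a x}

end PseudoHoop

open PseudoHoop

section Aux

variable {A : Type*} [PseudoHoop A]

lemma ph_le_iff_sarr (x y : A) : x ≤ y ↔ sarr x y = 1 := by
  rw [le_iff_arr]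
  constructor
  · intro h
    have hx : x * sarr x y = x := by rw [← div₂, h, one_mul']
    calc sarr x y = sarr (x * sarr x y) y := by rw [hx]
      _ = sarr (sarr x y) (sarr x y) := sarr_mul _ _ _
      _ = 1 := sarr_self _
  · intro h
    have hx : arr x y * x = x := by rw [div₂, h, mul_one']
    calc arr x y = arr (arr x y * x) y := by rw [hx]
      _ = arr (arr x y) (arr x y) := arr_mul _ _ _
      _ = 1 := arr_self _

lemma ph_resid_arr (x y z : A) : x * y ≤ z ↔ x ≤ arr y z := by
  rw [le_iff_arr, le_iff_arr, arr_mul]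

lemma ph_resid_sarr (x y z : A) : x * y ≤ z ↔ y ≤ sarr x z := by
  rw [ph_le_iff_sarr, ph_le_iff_sarr, sarr_mul]

lemma ph_arr_one_left (x : A) : arr 1 x = x := by
  apply le_antisymm
  · have := (ph_resid_arr (arr 1 x) 1 x).mpr le_rfl
    rwa [mul_one'] at this
  · have : x * 1 ≤ x := by rw [mul_one']
    exact (ph_resid_arr x 1 x).mp this

lemma ph_le_one (x : A) : x ≤ 1 := by
  rw [le_iff_arr]
  have h1 : arr x 1 * x = x := by rw [div₁, mul_one', ph_arr_one_left]
  calc arr x 1 = arr (arr x 1 * x) 1 := by rw [h1]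
    _ = arr (arr x 1) (arr x 1) := arr_mul _ _ _
    _ = 1 := arr_self _

lemma ph_mul_assoc (x y z : A) : x * y * z = x * (y * z) := by
  have key : ∀ w : A, arr (x * y * z) w = arr (x * (y * z)) w := by
    intro w
    rw [arr_mul, arr_mul, arr_mul, arr_mul]
  apply le_antisymm
  · rw [le_iff_arr, key, arr_self]
  · rw [le_iff_arr, ← key, arr_self]

lemma ph_mul_le_left (x y : A) : x * y ≤ x := by
  rw [ph_resid_sarr]
  rw [sarr_self]
  exact ph_le_one y

lemma ph_mul_le_right (x y : A) : x * y ≤ y := by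
  rw [ph_resid_arr, arr_self]
  exact ph_le_one x

lemma ph_mul_mono_left {u v : A} (x : A) (h : u ≤ v) : u * x ≤ v * x := by
  rw [ph_resid_arr]
  exact le_trans h ((ph_resid_arr v x (v * x)).mp le_rfl)

lemma ph_mul_mono_right {u v : A} (x : A) (h : u ≤ v) : x * u ≤ x * v := by
  rw [ph_resid_sarr]
  exact le_trans h ((ph_resid_sarr x v (x * v)).mp le_rfl)

lemma ph_pinf_le_left (x y : A) : pinf x y ≤ x := ph_mul_le_right _ _

lemma ph_pinf_le_right (x y : A) : pinf x y ≤ y :=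
  (ph_resid_arr (arr x y) x y).mpr le_rfl

lemma ph_le_pinf {z x y : A} (hx : z ≤ x) (hy : z ≤ y) : z ≤ pinf x y := by
  have hz : arr x z * x = z := by
    rw [div₁, (le_iff_arr z x).mp hx, one_mul']
  have harr : arr x z ≤ arr x y := by
    rw [← ph_resid_arr, hz]
    exact hy
  calc z = arr x z * x := hz.symm
    _ ≤ arr x y * x := ph_mul_mono_left x harr
    _ = pinf x y := rfl

end Aux

/-- A filter of a pseudo-hoop possessing a least element `a` is normal;
moreover `a` is idempotent and commutes with every element. -/
theorem filter_with_least_is_normal {A : Type*} [PseudoHoop A] (F : Set A)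
    (hF : PHFilter F) (a : A) (ha : IsLeast F a) :
    a * a = a ∧ (∀ x : A, a * x = x * a) ∧
    (∀ x y : A, arr x y ∈ F ↔ sarr x y ∈ F) := by
  have mem_iff : ∀ z : A, z ∈ F ↔ a ≤ z := fun z =>
    ⟨fun h => ha.2 h, fun h => hF.1 h ha.1⟩
  have hidem : a * a = a := by
    apply le_antisymm (ph_mul_le_left a a)
    exact (mem_iff _).mp (hF.2.2 a ha.1 a ha.1)
  have hcomm : ∀ x : A, a * x = x * a := by
    intro x
    have h1 : a * x = pinf a x := by
      apply le_antisymm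
      · exact ph_le_pinf (ph_mul_le_left a x) (ph_mul_le_right a x)
      · have hpd : a * sarr a x = pinf a x := (div₂ a x).symm
        calc pinf a x = a * (a * sarr a x) := by
              rw [← ph_mul_assoc, hidem, hpd]
          _ = a * pinf a x := by rw [hpd]
          _ ≤ a * x := ph_mul_mono_right a (ph_pinf_le_right a x)
    have h2 : x * a = pinf a x := by
      apply le_antisymm
      · exact ph_le_pinf (ph_mul_le_right x a) (ph_mul_le_left x a)
      · calc pinf a x = arr a x * (a * a) := by rw [hidem]; rfl
          _ = pinf a x * a := by rw [← ph_mul_assoc]; rfl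
          _ ≤ x * a := ph_mul_mono_left a (ph_pinf_le_right a x)
    rw [h1, h2]
  refine ⟨hidem, hcomm, fun x y => ?_⟩
  rw [mem_iff, mem_iff, ← ph_resid_arr, ← ph_resid_sarr, hcomm]
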